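/- Fix a sequence of poles ξ_1, ξ_2, … in the open unit disk and fix k, l ≥ 1. With z_r = e^{2πi(r−1)/N}, the averaged sample sum (1/N) Σ_{r=1}^N conj(z_r^{−(k−1)}) ψ_l(z_r) converges, as N → ∞, to the impulse-response coefficient a_{(k−1),l} of ψ_l. -/

import Mathlib

/-!
Expanding `ψ_l(z_r) = Σ_d a_d z_r^{-d}` and averaging over the `N`-th roots of unity kills every
coefficient except those with `d ≡ k (mod N)` (aliasing), so the sample sum equals
`Σ_d [N ∣ k - d] a_d`. As `N → ∞` each weight `[N ∣ k - d]` tends to `[d = k]`, and since the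
Laurent series converges at `z = 1` (hence absolutely, in `ℂ`), `Σ_d ‖a_d‖ < ∞` dominates the
series: Tannery's theorem gives the limit `a_k`.
-/

open Finset

/-- The Takenaka–Malmquist basis function ψ_{l+1} (0-indexed `l`), with poles
`ξ 0, ξ 1, …` (so `ξ j` is the paper's ξ_{j+1}). -/
noncomputable def TM (ξ : ℕ → ℂ) (l : ℕ) (z : ℂ) : ℂ :=
  ((Real.sqrt (1 - ‖ξ l‖ ^ 2) : ℂ) / (z - ξ l)) *
    ∏ j ∈ Finset.range l, (1 - (starRingEnd ℂ) (ξ j) * z) / (z - ξ j)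

/-- The sample point z_{r+1} = e^{2πi r/N} (0-indexed `r`). -/
noncomputable def zroot (N r : ℕ) : ℂ :=
  Complex.exp (2 * Real.pi * Complex.I * r / N)

open Filter Topology

theorem IsPrimitiveRoot.sum_pow_zpow {K : Type*} [Field K] {ζ : K} {N : ℕ}
    (hζ : IsPrimitiveRoot ζ N) (m : ℤ) :
    ∑ r ∈ range N, (ζ ^ r) ^ m = if (N : ℤ) ∣ m then (N : K) else 0 := by
  have hpow (r : ℕ) : (ζ ^ r) ^ m = (ζ ^ m) ^ r := by
    rw [← zpow_natCast, ← zpow_natCast, ← zpow_mul, ← zpow_mul, mul_comm]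
  simp only [hpow]
  split_ifs with hdvd
  · simp [(hζ.zpow_eq_one_iff_dvd m).mpr hdvd]
  · have hne : ζ ^ m ≠ 1 := fun h => hdvd ((hζ.zpow_eq_one_iff_dvd m).mp h)
    have hN : (ζ ^ m) ^ N = 1 := by
      rw [← zpow_natCast, ← zpow_mul, hζ.zpow_eq_one_iff_dvd]
      exact Dvd.intro_left m rfl
    rw [geom_sum_eq hne, hN, sub_self, zero_div]

lemma zroot_eq_pow (N r : ℕ) : zroot N r = zroot N 1 ^ r := by
  rw [zroot, zroot, ← Complex.exp_nat_mul]
  ring_nf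

lemma zroot_ne_zero (N r : ℕ) : zroot N r ≠ 0 := Complex.exp_ne_zero _

lemma isPrimitiveRoot_zroot {N : ℕ} (hN : N ≠ 0) : IsPrimitiveRoot (zroot N 1) N := by
  simpa [zroot] using Complex.isPrimitiveRoot_exp N hN

lemma norm_zroot (N r : ℕ) : ‖zroot N r‖ = 1 := by
  rw [zroot, show 2 * (Real.pi : ℂ) * Complex.I * r / N = ((2 * Real.pi * r / N : ℝ) : ℂ) *
    Complex.I by push_cast; ring, Complex.norm_exp_ofReal_mul_I]

lemma sum_zroot_zpow {N : ℕ} (hN : N ≠ 0) (m : ℤ) :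
    ∑ r ∈ range N, zroot N r ^ m = if (N : ℤ) ∣ m then (N : ℂ) else 0 := by
  rw [← (isPrimitiveRoot_zroot hN).sum_pow_zpow m]
  exact sum_congr rfl fun r _ => by rw [← zroot_eq_pow]

lemma conj_zpow_neg_of_norm_eq_one {z : ℂ} (hz : ‖z‖ = 1) (n : ℤ) :
    (starRingEnd ℂ) (z ^ (-n)) = z ^ n := by
  rw [map_zpow₀, ← Complex.inv_eq_conj hz, inv_zpow', neg_neg]

theorem hasSum_sample_sum_ite_dvd {f : ℂ → ℂ} {c : ℕ → ℂ}
    (hf : ∀ z : ℂ, ‖z‖ = 1 → HasSum (fun d : ℕ => c d * z ^ (-(d : ℤ))) (f z))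
    {N : ℕ} (hN : N ≠ 0) (k : ℕ) :
    HasSum (fun d : ℕ => if (N : ℤ) ∣ ((k : ℤ) - d) then c d else 0)
      ((N : ℂ)⁻¹ * ∑ r ∈ range N, (starRingEnd ℂ) (zroot N r ^ (-(k : ℤ))) * f (zroot N r)) := by
  have hsample (r : ℕ) : HasSum (fun d : ℕ => c d * zroot N r ^ ((k : ℤ) - d))
      ((starRingEnd ℂ) (zroot N r ^ (-(k : ℤ))) * f (zroot N r)) := by
    rw [conj_zpow_neg_of_norm_eq_one (norm_zroot N r)]
    refine ((hf _ (norm_zroot N r)).mul_left (zroot N r ^ (k : ℤ))).congr_fun fun d => ?_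
    rw [sub_eq_add_neg, zpow_add₀ (zroot_ne_zero N r)]
    ring
  refine ((hasSum_sum fun r _ => hsample r).mul_left (N : ℂ)⁻¹).congr_fun fun d => ?_
  rw [← mul_sum, sum_zroot_zpow hN, mul_ite, mul_ite, mul_zero, mul_zero,
    mul_left_comm, inv_mul_cancel₀ (Nat.cast_ne_zero.mpr hN), mul_one]

lemma eventually_intCast_dvd_sub_iff (k d : ℕ) :
    ∀ᶠ N : ℕ in atTop, ((N : ℤ) ∣ ((k : ℤ) - d) ↔ d = k) := by
  filter_upwards [eventually_gt_atTop (k + d)] with N hN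
  refine ⟨fun h => ?_, fun h => by simp [h]⟩
  have := Int.eq_zero_of_abs_lt_dvd h (abs_lt.mpr ⟨by omega, by omega⟩)
  omega

theorem tendsto_sample_sum_of_hasSum_laurent {f : ℂ → ℂ} {c : ℕ → ℂ}
    (hf : ∀ z : ℂ, ‖z‖ = 1 → HasSum (fun d : ℕ => c d * z ^ (-(d : ℤ))) (f z)) (k : ℕ) :
    Tendsto (fun N : ℕ => (N : ℂ)⁻¹ *
        ∑ r ∈ range N, (starRingEnd ℂ) (zroot N r ^ (-(k : ℤ))) * f (zroot N r))
      atTop (𝓝 (c k)) := by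
  have hc : Summable (‖c ·‖) := summable_norm_iff.mpr (by simpa using (hf 1 norm_one).summable)
  have hweights (d : ℕ) : Tendsto (fun N : ℕ => if (N : ℤ) ∣ ((k : ℤ) - d) then c d else 0)
      atTop (𝓝 (if d = k then c k else 0)) := by
    refine tendsto_const_nhds.congr' ?_
    filter_upwards [eventually_intCast_dvd_sub_iff k d] with N hN
    by_cases hd : d = k <;> simp [hN, hd]
  have hlim := tendsto_tsum_of_dominated_convergence hc hweights
    (Eventually.of_forall fun N d => by split_ifs <;> simp)
  rw [tsum_ite_eq] at hlim
  refine hlim.congr' ?_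
  filter_upwards [eventually_ne_atTop 0] with N hN
  exact (hasSum_sample_sum_ite_dvd hf hN k).tsum_eq

/-- With `a d l` the impulse-response (Laurent) coefficients of the TM
basis functions (hypothesis `ha`) and fixed k, l, the averaged sample sum
(1/N) Σ_{r=1}^N conj(z_r^{−k}) ψ_l(z_r) over the N-th roots of unity converges to the
impulse-response coefficient a_{k,l} (the paper's a_{(k−1),l}) as N → ∞. -/
theorem fir_tm_sample_sum_tendsto_coeff (ξ : ℕ → ℂ) (hξ : ∀ j, ‖ξ j‖ < 1)
    (a : ℕ → ℕ → ℂ)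
    (ha : ∀ l : ℕ, ∀ z : ℂ, (∀ j ≤ l, ‖ξ j‖ < ‖z‖) →
      HasSum (fun d : ℕ => a d l * z ^ (-(d : ℤ))) (TM ξ l z))
    (k l : ℕ) :
    Filter.Tendsto
      (fun N : ℕ => (N : ℂ)⁻¹ *
        ∑ r ∈ Finset.range N, (starRingEnd ℂ) (zroot N r ^ (-(k : ℤ))) * TM ξ l (zroot N r))
      Filter.atTop (nhds (a k l)) :=
  tendsto_sample_sum_of_hasSum_laurent (fun z hz => ha l z fun j _ => hz ▸ hξ j) k
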